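/- A Merkle authentication path verifies membership: if a leaf value v together with d sibling values and a position p ∈ Fin 2^d recomputes to the committed root of leaf-vector L, and the hash is collision-resistant (no collisions exist in the relevant domain), then L p = v. -/
import Mathlib


/-- The Merkle root of a complete binary tree with `2^d` leaves, combining children
with the hash `h`. -/
def merkleRoot {α : Type*} (h : α → α → α) : (d : ℕ) → (Fin (2 ^ d) → α) → α
  | 0, L => L ⟨0, by norm_num⟩
  | d + 1, L =>
      h (merkleRoot h d (fun i => L ⟨(i : ℕ), by
            have := i.isLt
            calc (i : ℕ) < 2 ^ d := this
              _ ≤ 2 ^ (d + 1) := Nat.pow_le_pow_right (by norm_num) (Nat.le_succ d)⟩))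
        (merkleRoot h d (fun i => L ⟨2 ^ d + (i : ℕ), by
            have := i.isLt; rw [pow_succ]; omega⟩))

/-- Recompute a candidate root from a leaf value `v`, a leaf position `p` (as a
natural number, least-significant bit first) and a list of sibling hashes, folding
the hash `h` up the tree. -/
def pathRecompute {α : Type*} (h : α → α → α) : ℕ → α → List α → α
  | _, v, [] => v
  | p, v, s :: rest =>
      pathRecompute h (p / 2) (if p % 2 = 0 then h v s else h s v) rest

theorem two_mul_lt {d : ℕ} (i : Fin (2 ^ d)) : 2 * (i : ℕ) < 2 ^ (d + 1) := by
  have := i.isLt; rw [pow_succ]; omega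

theorem two_mul_add_one_lt {d : ℕ} (i : Fin (2 ^ d)) : 2 * (i : ℕ) + 1 < 2 ^ (d + 1) := by
  have := i.isLt; rw [pow_succ]; omega

theorem merkleRoot_succ {α : Type*} (h : α → α → α) (d : ℕ) (L : Fin (2 ^ (d + 1)) → α) :
    merkleRoot h (d + 1) L =
      merkleRoot h d (fun i => h (L ⟨2 * i, two_mul_lt i⟩) (L ⟨2 * i + 1, two_mul_add_one_lt i⟩)) := by
  induction d with
  | zero => rfl
  | succ d ih =>
    show h _ _ = h _ _
    rw [ih, ih]
    congr 1 <;> apply congrArg <;> funext i <;> congr 1 <;> apply congrArg <;>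
      apply Fin.ext <;> simp [pow_succ] <;> ring

/-- A Merkle authentication path verifies membership: if a leaf value `v` together
with `d` siblings at position `p` recomputes to the committed root of `L`, and the
hash is collision-free, then `v` is indeed the leaf of `L` at position `p`. -/
theorem merkle_path_sound {α : Type*} (h : α → α → α) (d : ℕ)
    (hcf : ∀ a b a' b' : α, h a b = h a' b' → a = a' ∧ b = b')
    (L : Fin (2 ^ d) → α) (p : Fin (2 ^ d)) (v : α) (siblings : List α)
    (hlen : siblings.length = d)
    (hver : pathRecompute h (p : ℕ) v siblings = merkleRoot h d L) :
    v = L p := by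
  induction d generalizing v siblings with
  | zero =>
    match siblings, hlen with
    | [], _ =>
      simp only [pathRecompute, merkleRoot] at hver
      have : p = ⟨0, by norm_num⟩ := by
        apply Fin.ext; have := p.isLt; omega
      rw [this]; exact hver
  | succ d ih =>
    match siblings, hlen with
    | s :: rest, hlen =>
      simp only [pathRecompute] at hver
      rw [merkleRoot_succ] at hver
      have hlt : (p : ℕ) / 2 < 2 ^ d := by
        have h1 := p.isLt; have h2 : (2:ℕ)^(d+1) = 2^d*2 := pow_succ 2 d; omega
      have key := ih (fun i => h (L ⟨2 * i, two_mul_lt i⟩) (L ⟨2 * i + 1, two_mul_add_one_lt i⟩))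
        ⟨(p : ℕ) / 2, hlt⟩ _ rest (by simpa using hlen) hver
      simp only at key
      rcases Nat.mod_two_eq_zero_or_one (p : ℕ) with hp | hp
      · rw [if_pos hp] at key
        have h1 := (hcf _ _ _ _ key).1
        have : p = ⟨2 * ((p : ℕ) / 2), two_mul_lt ⟨_, hlt⟩⟩ := by
          apply Fin.ext; simp; omega
        rw [this]; exact h1
      · rw [if_neg (by omega)] at key
        have h2 := (hcf _ _ _ _ key).2
        have : p = ⟨2 * ((p : ℕ) / 2) + 1, two_mul_add_one_lt ⟨_, hlt⟩⟩ := by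
          apply Fin.ext; simp; omega
        rw [this]; exact h2
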